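/- arXiv:1312.2398 — 2 statements merged into one kernel-verified Lean document; each statement's English description precedes it below -/
import Mathlib

section
/- Let ν be a Borel measure on ℝ with ν({0}) = 0, ∫_ℝ min(1, y²) ν(dy) < ∞, and ∫_{|y|≥1} log|y| ν(dy) < ∞ (logarithmic moment condition). Then for every λ > 0 and every real numbers β and h, the nonnegative function u ↦ ∫_ℝ (1 − cos(exp(−λ u)·β·h·y)) ν(dy) is integrable on [0, ∞), i.e. ∫_0^∞ ψ_ℝ(exp(−λ u)·β·h) du < ∞, where ψ_ℝ(h) := ∫_ℝ (1 − cos(h y)) ν(dy). -/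
open MeasureTheory Real Set Filter Topology
open scoped ENNReal

/-!
Since `1 - cos t ≤ 4 t² / (1 + t²)` and `u ↦ (e^{-λu} x)² / (1 + (e^{-λu} x)²)` is the derivative
of `-log (1 + (e^{-λu} x)²) / (2λ)`, Tonelli bounds `∫₀^∞ ψ(e^{-λu} c) du` by
`(2/λ) ∫ log (1 + (c y)²) ν(dy)`. The last integrand is `O(y²)` near the origin and
`2 log |y| + O(1)` for `|y| ≥ 1`, so it is integrable by the two moment hypotheses.
Tonelli applies because `ν` is s-finite: it is σ-finite off the origin, where `min 1 y² > 0`,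
and an atom at the origin, even of infinite mass, is s-finite.
-/

theorem MeasureTheory.sigmaFinite_restrict_support_of_lintegral_ne_top {α : Type*}
    [MeasurableSpace α] {μ : Measure α} {f : α → ℝ≥0∞} (hf : Measurable f)
    (hfin : ∫⁻ x, f x ∂μ ≠ ∞) : SigmaFinite (μ.restrict (Function.support f)) := by
  set s := Function.support f
  have hs : MeasurableSet s := measurableSet_support hf
  have hpos : ∀ᵐ x ∂μ.restrict s, f x ≠ 0 := ae_restrict_mem hs
  have hlt : ∀ᵐ x ∂μ.restrict s, f x ≠ ∞ :=
    ae_restrict_of_ae ((ae_lt_top hf hfin).mono fun _ hx => hx.ne)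
  have : IsFiniteMeasure ((μ.restrict s).withDensity f) :=
    isFiniteMeasure_withDensity (ne_top_of_le_ne_top hfin (setLIntegral_le_lintegral s f))
  rw [← withDensity_inv_same hf hpos hlt]
  refine SigmaFinite.withDensity_of_ne_top ?_
  filter_upwards [withDensity_absolutelyContinuous _ _ hpos] with x hx
  simpa using hx

theorem sFinite_of_lintegral_min_one_sq_ne_top {ν : Measure ℝ}
    (hν : ∫⁻ y, ENNReal.ofReal (min 1 (y ^ 2)) ∂ν ≠ ∞) : SFinite ν := by
  have hsupp : Function.support (fun y : ℝ => ENNReal.ofReal (min 1 (y ^ 2))) = {0}ᶜ := by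
    ext y; simp
  have := sigmaFinite_restrict_support_of_lintegral_ne_top (by fun_prop) hν
  rw [hsupp] at this
  rw [← Measure.restrict_compl_add_restrict (μ := ν) (measurableSet_singleton 0),
    Measure.restrict_singleton]
  infer_instance

theorem one_sub_cos_le_four_mul_sq_div_one_add_sq (t : ℝ) :
    1 - cos t ≤ 4 * (t ^ 2 / (1 + t ^ 2)) := by
  have h₁ : 1 - cos t ≤ t ^ 2 / 2 := by linarith [one_sub_sq_div_two_le_cos (x := t)]
  have h₂ : 1 - cos t ≤ 2 := by linarith [neg_one_le_cos t]
  rw [mul_div_assoc', le_div_iff₀ (by positivity)]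
  nlinarith [mul_le_mul_of_nonneg_right h₂ (sq_nonneg t)]

theorem lintegral_Ici_sq_div_one_add_sq_exp {lam : ℝ} (hlam : 0 < lam) (x : ℝ) :
    ∫⁻ u in Ici 0, ENNReal.ofReal ((exp (-lam * u) * x) ^ 2 / (1 + (exp (-lam * u) * x) ^ 2))
      = ENNReal.ofReal (log (1 + x ^ 2) / (2 * lam)) := by
  set g' : ℝ → ℝ := fun u => (exp (-lam * u) * x) ^ 2 / (1 + (exp (-lam * u) * x) ^ 2)
  set g : ℝ → ℝ := fun u => -(log (1 + (exp (-lam * u) * x) ^ 2) / (2 * lam))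
  have hderiv : ∀ u ∈ Ici (0 : ℝ), HasDerivAt g (g' u) u := by
    intro u _
    have hexp : HasDerivAt (fun u => exp (-lam * u) * x) (exp (-lam * u) * (-lam) * x) u := by
      simpa using ((hasDerivAt_id u).const_mul (-lam)).exp.mul_const x
    have hpos : 0 < 1 + (exp (-lam * u) * x) ^ 2 := by positivity
    refine ((((hexp.fun_pow 2).const_add 1).log hpos.ne').div_const (2 * lam)).neg.congr_deriv ?_
    simp only [g']
    field_simp
    ring
  have hnonneg : ∀ u ∈ Ioi (0 : ℝ), 0 ≤ g' u := fun u _ => by positivity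
  have hlim : Tendsto g atTop (𝓝 0) := by
    have hexp : Tendsto (fun u => exp (-lam * u) * x) atTop (𝓝 0) := by
      simpa using ((tendsto_exp_neg_atTop_nhds_zero.comp
        (tendsto_id.const_mul_atTop hlam)).mul_const x)
    have hcont : Continuous fun t : ℝ => -(log (1 + t ^ 2) / (2 * lam)) :=
      ((continuous_const.add (continuous_pow 2)).log fun t =>
        (by positivity : (0 : ℝ) < 1 + t ^ 2).ne').div_const _ |>.neg
    simpa [g, Function.comp_def] using (hcont.tendsto 0).comp hexp
  rw [setLIntegral_congr Ioi_ae_eq_Ici.symm, ← ofReal_integral_eq_lintegral_ofReal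
    (integrableOn_Ioi_deriv_of_nonneg' hderiv hnonneg hlim)
    (ae_restrict_of_forall_mem measurableSet_Ioi hnonneg),
    integral_Ioi_of_hasDerivAt_of_nonneg' hderiv hnonneg hlim]
  simp [g]

theorem log_one_add_mul_sq_le (c y : ℝ) :
    log (1 + (c * y) ^ 2) ≤ max (c ^ 2) (log (1 + c ^ 2)) * min 1 (y ^ 2)
      + {y : ℝ | 1 ≤ |y|}.indicator (fun y => 2 * log |y|) y := by
  rcases le_or_gt 1 |y| with hy | hy
  · have hy2 : 1 ≤ y ^ 2 := by nlinarith [sq_abs y]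
    have hmono : log (1 + (c * y) ^ 2) ≤ log ((1 + c ^ 2) * y ^ 2) :=
      log_le_log (by positivity) (by nlinarith [sq_nonneg c])
    have hsplit : log ((1 + c ^ 2) * y ^ 2) = log (1 + c ^ 2) + 2 * log |y| := by
      rw [log_mul (by positivity) (by positivity), ← sq_abs y, log_pow, Nat.cast_ofNat]
    rw [indicator_of_mem (show y ∈ {y : ℝ | 1 ≤ |y|} from hy), min_eq_left hy2, mul_one]
    linarith [le_max_right (c ^ 2) (log (1 + c ^ 2))]
  · have hy2 : y ^ 2 ≤ 1 := by nlinarith [sq_abs y, abs_nonneg y]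
    rw [indicator_of_notMem (show y ∉ {y : ℝ | 1 ≤ |y|} from hy.not_ge), min_eq_right hy2,
      add_zero]
    calc log (1 + (c * y) ^ 2) ≤ (c * y) ^ 2 := by
          linarith [log_le_sub_one_of_pos (x := 1 + (c * y) ^ 2) (by positivity)]
      _ = c ^ 2 * y ^ 2 := mul_pow c y 2
      _ ≤ _ := mul_le_mul_of_nonneg_right (le_max_left _ _) (sq_nonneg y)

theorem lintegral_log_one_add_mul_sq_lt_top {ν : Measure ℝ}
    (hν : ∫⁻ y, ENNReal.ofReal (min 1 (y ^ 2)) ∂ν < ∞)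
    (hlog : ∫⁻ y in {y : ℝ | 1 ≤ |y|}, ENNReal.ofReal (log |y|) ∂ν < ∞) (c : ℝ) :
    ∫⁻ y, ENNReal.ofReal (log (1 + (c * y) ^ 2)) ∂ν < ∞ := by
  set C := max (c ^ 2) (log (1 + c ^ 2))
  set S := {y : ℝ | 1 ≤ |y|}
  have hS : MeasurableSet S := measurableSet_le measurable_const measurable_norm
  have hbound : ∀ y, ENNReal.ofReal (log (1 + (c * y) ^ 2))
      ≤ ENNReal.ofReal C * ENNReal.ofReal (min 1 (y ^ 2))
        + S.indicator (fun y => 2 * ENNReal.ofReal (log |y|)) y := fun y =>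
    calc ENNReal.ofReal (log (1 + (c * y) ^ 2))
        ≤ ENNReal.ofReal (C * min 1 (y ^ 2))
          + ENNReal.ofReal (S.indicator (fun y => 2 * log |y|) y) :=
          (ENNReal.ofReal_le_ofReal (log_one_add_mul_sq_le c y)).trans ENNReal.ofReal_add_le
      _ ≤ _ := by
          gcongr
          · exact (ENNReal.ofReal_mul (le_max_of_le_left (sq_nonneg c))).le
          · by_cases hy : y ∈ S <;> simp [hy, ENNReal.ofReal_mul]
  calc ∫⁻ y, ENNReal.ofReal (log (1 + (c * y) ^ 2)) ∂ν
      ≤ ∫⁻ y, (ENNReal.ofReal C * ENNReal.ofReal (min 1 (y ^ 2))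
        + S.indicator (fun y => 2 * ENNReal.ofReal (log |y|)) y) ∂ν := lintegral_mono hbound
    _ = ENNReal.ofReal C * ∫⁻ y, ENNReal.ofReal (min 1 (y ^ 2)) ∂ν
        + 2 * ∫⁻ y in S, ENNReal.ofReal (log |y|) ∂ν := by
      rw [lintegral_add_left (by fun_prop), lintegral_const_mul _ (by fun_prop),
        lintegral_indicator hS, lintegral_const_mul' _ _ ENNReal.ofNat_ne_top]
    _ < ∞ := by finiteness

theorem lintegral_Ici_lintegral_one_sub_cos_le {ν : Measure ℝ} [SFinite ν] {lam : ℝ}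
    (hlam : 0 < lam) (a : ℝ) :
    ∫⁻ u in Ici 0, ∫⁻ y, ENNReal.ofReal (1 - cos (exp (-lam * u) * a * y)) ∂ν
      ≤ ENNReal.ofReal (2 / lam) * ∫⁻ y, ENNReal.ofReal (log (1 + (a * y) ^ 2)) ∂ν := by
  set F : ℝ → ℝ → ℝ≥0∞ := fun u y => ENNReal.ofReal
    ((exp (-lam * u) * (a * y)) ^ 2 / (1 + (exp (-lam * u) * (a * y)) ^ 2)) with hF
  have hFmeas : Measurable (Function.uncurry F) := by
    refine ENNReal.measurable_ofReal.comp (Continuous.measurable ?_)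
    exact Continuous.div (by fun_prop) (by fun_prop) fun p => by positivity
  calc ∫⁻ u in Ici 0, ∫⁻ y, ENNReal.ofReal (1 - cos (exp (-lam * u) * a * y)) ∂ν
      ≤ ∫⁻ u in Ici 0, ∫⁻ y, 4 * F u y ∂ν := by
        refine lintegral_mono fun u => lintegral_mono fun y => ?_
        rw [hF, ← ENNReal.ofReal_ofNat 4, ← ENNReal.ofReal_mul (by norm_num), mul_assoc]
        exact ENNReal.ofReal_le_ofReal (one_sub_cos_le_four_mul_sq_div_one_add_sq _)
    _ = ∫⁻ y, (∫⁻ u in Ici 0, 4 * F u y) ∂ν :=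
        lintegral_lintegral_swap (f := fun u y => 4 * F u y) (hFmeas.const_mul 4).aemeasurable
    _ = ∫⁻ y, 4 * ENNReal.ofReal (log (1 + (a * y) ^ 2) / (2 * lam)) ∂ν := by
        simp only [lintegral_const_mul' _ _ ENNReal.ofNat_ne_top, hF,
          lintegral_Ici_sq_div_one_add_sq_exp hlam]
    _ = ENNReal.ofReal (2 / lam) * ∫⁻ y, ENNReal.ofReal (log (1 + (a * y) ^ 2)) ∂ν := by
        rw [← lintegral_const_mul' _ _ ENNReal.ofReal_ne_top]
        refine lintegral_congr fun y => ?_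
        rw [← ENNReal.ofReal_ofNat 4, ← ENNReal.ofReal_mul (by norm_num),
          ← ENNReal.ofReal_mul (by positivity)]
        congr 1
        field_simp
        ring

theorem levy_exponent_time_integrable_of_log_moment_general
    (ν : Measure ℝ)
    (hν : ∫⁻ y, ENNReal.ofReal (min 1 (y ^ 2)) ∂ν < ⊤)
    (hlog : ∫⁻ y in {y : ℝ | 1 ≤ |y|}, ENNReal.ofReal (Real.log |y|) ∂ν < ⊤) :
    ∀ lam : ℝ, 0 < lam → ∀ β h : ℝ,
      IntegrableOn
        (fun u : ℝ => ∫ y, (1 - Real.cos (Real.exp (-lam * u) * β * h * y)) ∂ν)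
        (Set.Ici (0 : ℝ)) := by
  intro lam hlam β h
  have : SFinite ν := sFinite_of_lintegral_min_one_sq_ne_top hν.ne
  have hmeas : StronglyMeasurable fun p : ℝ × ℝ => 1 - cos (exp (-lam * p.1) * β * h * p.2) :=
    (by fun_prop : Continuous _).stronglyMeasurable
  refine ⟨(hmeas.integral_prod_right' (ν := ν)).aestronglyMeasurable, ?_⟩
  have hnorm : ∀ t : ℝ, ‖1 - cos t‖ₑ = ENNReal.ofReal (1 - cos t) := fun t =>
    Real.enorm_of_nonneg (sub_nonneg.2 (cos_le_one t))
  calc ∫⁻ u in Ici 0, ‖∫ y, (1 - cos (exp (-lam * u) * β * h * y)) ∂ν‖ₑ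
      ≤ ∫⁻ u in Ici 0, ∫⁻ y, ENNReal.ofReal (1 - cos (exp (-lam * u) * (β * h) * y)) ∂ν :=
        lintegral_mono fun u => by
          simpa only [hnorm, mul_assoc] using enorm_integral_le_lintegral_enorm (μ := ν)
            fun y => 1 - cos (exp (-lam * u) * β * h * y)
    _ ≤ ENNReal.ofReal (2 / lam) * ∫⁻ y, ENNReal.ofReal (log (1 + (β * h * y) ^ 2)) ∂ν :=
        lintegral_Ici_lintegral_one_sub_cos_le hlam (β * h)
    _ < ⊤ := ENNReal.mul_lt_top ENNReal.ofReal_lt_top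
        (lintegral_log_one_add_mul_sq_lt_top hν hlog (β * h))

theorem levy_exponent_time_integrable_of_log_moment
    (ν : Measure ℝ) (hν0 : ν {0} = 0)
    (hν : ∫⁻ y, ENNReal.ofReal (min 1 (y ^ 2)) ∂ν < ⊤)
    (hlog : ∫⁻ y in {y : ℝ | 1 ≤ |y|}, ENNReal.ofReal (Real.log |y|) ∂ν < ⊤) :
    ∀ lam : ℝ, 0 < lam → ∀ β h : ℝ,
      IntegrableOn
        (fun u : ℝ => ∫ y, (1 - Real.cos (Real.exp (-lam * u) * β * h * y)) ∂ν)
        (Set.Ici (0 : ℝ)) :=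
  levy_exponent_time_integrable_of_log_moment_general ν hν hlog
end

section
/- Let H be a real Banach space, ω > η ≥ 0, and let S : ℝ → (bounded linear operators on H) satisfy: ‖S(t)‖ ≤ exp(−ω t) for all t ≥ 0, and for each x ∈ H the map t ↦ S(t)x is continuous on [0, ∞). Let G : H → H be Lipschitz continuous with Lipschitz constant η, and let φ : ℝ → H be bounded and continuous. Then there exists exactly one bounded continuous function r : ℝ → H such that for every t ∈ ℝ, r(t) = ∫_{−∞}^{t} S(t−s)·G(r(s)) ds + φ(t), the (Bochner) integral being absolutely convergent. -/
/-!
After the substitution `u = t - s`, the integrand `S(t - s) G(r(s))` of the mild equation is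
dominated by `e^{-ωu} sup ‖G ∘ r‖`, so for bounded continuous `r` the integral converges absolutely,
depends continuously on `t` (dominated convergence) and is bounded by `sup ‖G ∘ r‖ / ω`, because
`∫₀^∞ e^{-ωu} du = 1/ω`. Hence `r ↦ ∫_{-∞}^· S(· - s) G(r(s)) ds + φ` maps the Banach space of
bounded continuous functions into itself and is a contraction of constant `η / ω < 1`; the Banach
fixed point theorem gives the unique solution.
-/

open MeasureTheory Set Filter Topology BoundedContinuousFunction

theorem ContinuousOn.clm_apply_of_norm_le {X 𝕜 E F : Type*} [TopologicalSpace X]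
    [NontriviallyNormedField 𝕜] [NormedAddCommGroup E] [NormedSpace 𝕜 E]
    [NormedAddCommGroup F] [NormedSpace 𝕜 F]
    {S : X → E →L[𝕜] F} {g : X → E} {s : Set X} {K : ℝ}
    (hS : ∀ x, ContinuousOn (fun t => S t x) s) (hK : ∀ t ∈ s, ‖S t‖ ≤ K)
    (hg : ContinuousOn g s) : ContinuousOn (fun t => S t (g t)) s := by
  intro t₀ ht₀
  show Tendsto _ _ _
  have hsmall : Tendsto (fun t => S t (g t - g t₀)) (𝓝[s] t₀) (𝓝 0) := by
    refine squeeze_zero_norm' ?_ (?_ : Tendsto (fun t => K * ‖g t - g t₀‖) _ (𝓝 0))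
    · filter_upwards [self_mem_nhdsWithin] with t ht
      exact (S t).le_of_opNorm_le (hK t ht) _
    · simpa using ((hg t₀ ht₀).sub_const (g t₀)).norm.const_mul K
  simpa [map_sub] using hsmall.add (hS (g t₀) t₀ ht₀)

lemma integrableOn_Ici_exp_neg_mul {ω : ℝ} (hω : 0 < ω) :
    IntegrableOn (fun u => Real.exp (-ω * u)) (Ici 0) := by
  rw [integrableOn_Ici_iff_integrableOn_Ioi]
  exact exp_neg_integrableOn_Ioi 0 hω

lemma integral_Ici_exp_neg_mul {ω : ℝ} (hω : 0 < ω) :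
    ∫ u in Ici 0, Real.exp (-ω * u) = ω⁻¹ := by
  rw [integral_Ici_eq_integral_Ioi, integral_exp_mul_Ioi (neg_lt_zero.2 hω)]
  simp

lemma integral_Iic_eq_integral_Ici_sub {E : Type*} [NormedAddCommGroup E] [NormedSpace ℝ E]
    (f : ℝ → E) (t : ℝ) :
    ∫ s in Iic t, f s = ∫ u in Ici 0, f (t - u) := by
  rw [← (Measure.measurePreserving_sub_left volume t).setIntegral_preimage_emb
    (Homeomorph.subLeft t).measurableEmbedding f (Iic t)]
  congr 1
  ext u; simp

lemma integrableOn_Iic_iff_integrableOn_Ici_sub {E : Type*} [NormedAddCommGroup E]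
    (f : ℝ → E) (t : ℝ) :
    IntegrableOn f (Iic t) ↔ IntegrableOn (fun u => f (t - u)) (Ici 0) := by
  rw [← (Measure.measurePreserving_sub_left volume t).integrableOn_comp_preimage
    (Homeomorph.subLeft t).measurableEmbedding]
  congr! 1
  ext u; simp

section StationaryConvolution

variable {H : Type*} [NormedAddCommGroup H] [NormedSpace ℝ H] {ω : ℝ} {S : ℝ → H →L[ℝ] H}

noncomputable def stationaryConvolution (S : ℝ → H →L[ℝ] H) (f : ℝ → H) (t : ℝ) : H :=
  ∫ s in Iic t, S (t - s) (f s)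

lemma stationaryConvolution_eq_integral_Ici (f : ℝ → H) (t : ℝ) :
    stationaryConvolution S f t = ∫ u in Ici 0, S u (f (t - u)) := by
  simp only [stationaryConvolution, integral_Iic_eq_integral_Ici_sub _ t, sub_sub_cancel]

lemma ae_norm_apply_le_exp_mul (hS : ∀ t, 0 ≤ t → ‖S t‖ ≤ Real.exp (-ω * t))
    (f : ℝ →ᵇ H) (t : ℝ) :
    ∀ᵐ u ∂volume.restrict (Ici 0), ‖S u (f (t - u))‖ ≤ Real.exp (-ω * u) * ‖f‖ := by
  refine (ae_restrict_iff' measurableSet_Ici).2 (ae_of_all _ fun u hu => ?_)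
  exact (S u).le_of_opNorm_le_of_le (hS u hu) (f.norm_coe_le_norm _)

lemma continuousOn_Ici_apply_sub (hω : 0 ≤ ω) (hS : ∀ t, 0 ≤ t → ‖S t‖ ≤ Real.exp (-ω * t))
    (hScont : ∀ x, ContinuousOn (fun t => S t x) (Ici 0)) (f : ℝ →ᵇ H) (t : ℝ) :
    ContinuousOn (fun u => S u (f (t - u))) (Ici 0) :=
  ContinuousOn.clm_apply_of_norm_le hScont
    (fun u hu => (hS u hu).trans (Real.exp_le_one_iff.2 (by nlinarith [mem_Ici.1 hu])))
    (f.continuous.comp (continuous_sub_left t)).continuousOn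

lemma integrableOn_Iic_apply_sub (hω : 0 < ω) (hS : ∀ t, 0 ≤ t → ‖S t‖ ≤ Real.exp (-ω * t))
    (hScont : ∀ x, ContinuousOn (fun t => S t x) (Ici 0)) (f : ℝ →ᵇ H) (t : ℝ) :
    IntegrableOn (fun s => S (t - s) (f s)) (Iic t) := by
  rw [integrableOn_Iic_iff_integrableOn_Ici_sub]
  simp only [sub_sub_cancel]
  exact ((integrableOn_Ici_exp_neg_mul hω).mul_const ‖f‖).mono'
    ((continuousOn_Ici_apply_sub hω.le hS hScont f t).aestronglyMeasurable measurableSet_Ici)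
    (ae_norm_apply_le_exp_mul hS f t)

lemma norm_stationaryConvolution_le (hω : 0 < ω)
    (hS : ∀ t, 0 ≤ t → ‖S t‖ ≤ Real.exp (-ω * t)) (f : ℝ →ᵇ H) (t : ℝ) :
    ‖stationaryConvolution S f t‖ ≤ ‖f‖ / ω := by
  rw [stationaryConvolution_eq_integral_Ici]
  calc ‖∫ u in Ici 0, S u (f (t - u))‖ ≤ ∫ u in Ici 0, Real.exp (-ω * u) * ‖f‖ :=
        norm_integral_le_of_norm_le ((integrableOn_Ici_exp_neg_mul hω).mul_const _)
          (ae_norm_apply_le_exp_mul hS f t)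
    _ = ‖f‖ / ω := by rw [integral_mul_const, integral_Ici_exp_neg_mul hω, inv_mul_eq_div]

lemma continuous_stationaryConvolution (hω : 0 < ω)
    (hS : ∀ t, 0 ≤ t → ‖S t‖ ≤ Real.exp (-ω * t))
    (hScont : ∀ x, ContinuousOn (fun t => S t x) (Ici 0)) (f : ℝ →ᵇ H) :
    Continuous (stationaryConvolution S f) := by
  simp only [funext (stationaryConvolution_eq_integral_Ici (S := S) f)]
  exact continuous_of_dominated
    (fun t => (continuousOn_Ici_apply_sub hω.le hS hScont f t).aestronglyMeasurable
      measurableSet_Ici)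
    (ae_norm_apply_le_exp_mul hS f) ((integrableOn_Ici_exp_neg_mul hω).mul_const _)
    (ae_of_all _ fun u => (S u).continuous.comp (f.continuous.comp (continuous_sub_right u)))

lemma stationaryConvolution_sub (hω : 0 < ω) (hS : ∀ t, 0 ≤ t → ‖S t‖ ≤ Real.exp (-ω * t))
    (hScont : ∀ x, ContinuousOn (fun t => S t x) (Ici 0)) (f g : ℝ →ᵇ H) (t : ℝ) :
    stationaryConvolution S ⇑(f - g) t =
      stationaryConvolution S f t - stationaryConvolution S g t := by
  simp only [stationaryConvolution, coe_sub, Pi.sub_apply, map_sub]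
  exact integral_sub (integrableOn_Iic_apply_sub hω hS hScont f t)
    (integrableOn_Iic_apply_sub hω hS hScont g t)

noncomputable def stationaryConvolutionBCF (hω : 0 < ω)
    (hS : ∀ t, 0 ≤ t → ‖S t‖ ≤ Real.exp (-ω * t))
    (hScont : ∀ x, ContinuousOn (fun t => S t x) (Ici 0)) (f : ℝ →ᵇ H) : ℝ →ᵇ H :=
  ofNormedAddCommGroup (stationaryConvolution S f)
    (continuous_stationaryConvolution hω hS hScont f) (‖f‖ / ω)
    (norm_stationaryConvolution_le hω hS f)

lemma dist_stationaryConvolutionBCF_le (hω : 0 < ω)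
    (hS : ∀ t, 0 ≤ t → ‖S t‖ ≤ Real.exp (-ω * t))
    (hScont : ∀ x, ContinuousOn (fun t => S t x) (Ici 0)) (f g : ℝ →ᵇ H) :
    dist (stationaryConvolutionBCF hω hS hScont f) (stationaryConvolutionBCF hω hS hScont g)
      ≤ ω⁻¹ * dist f g := by
  refine (dist_le (by positivity)).2 fun t => ?_
  rw [dist_eq_norm, dist_eq_norm, inv_mul_eq_div]
  simpa only [stationaryConvolutionBCF, coe_ofNormedAddCommGroup,
    stationaryConvolution_sub hω hS hScont] using norm_stationaryConvolution_le hω hS (f - g) t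

noncomputable def mildSolutionMap (hω : 0 < ω) (hS : ∀ t, 0 ≤ t → ‖S t‖ ≤ Real.exp (-ω * t))
    (hScont : ∀ x, ContinuousOn (fun t => S t x) (Ici 0)) {G : H → H} {K : NNReal}
    (hG : LipschitzWith K G) (φ : ℝ →ᵇ H) (r : ℝ →ᵇ H) : ℝ →ᵇ H :=
  stationaryConvolutionBCF hω hS hScont (r.comp G hG) + φ

lemma contractingWith_mildSolutionMap (hω : 0 < ω)
    (hS : ∀ t, 0 ≤ t → ‖S t‖ ≤ Real.exp (-ω * t))
    (hScont : ∀ x, ContinuousOn (fun t => S t x) (Ici 0)) {G : H → H} {K : NNReal}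
    (hG : LipschitzWith K G) (hK : (K : ℝ) < ω) (φ : ℝ →ᵇ H) :
    ContractingWith (Real.toNNReal (ω⁻¹ * K)) (mildSolutionMap hω hS hScont hG φ) := by
  refine ⟨Real.toNNReal_lt_one.2 ((inv_mul_lt_one₀ hω).2 hK), ?_⟩
  refine LipschitzWith.of_dist_le_mul fun r₁ r₂ => ?_
  rw [Real.coe_toNNReal _ (by positivity), mul_assoc]
  calc dist (mildSolutionMap hω hS hScont hG φ r₁) (mildSolutionMap hω hS hScont hG φ r₂)
      = dist (stationaryConvolutionBCF hω hS hScont (r₁.comp G hG))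
          (stationaryConvolutionBCF hω hS hScont (r₂.comp G hG)) := dist_add_right _ _ _
    _ ≤ ω⁻¹ * dist (r₁.comp G hG) (r₂.comp G hG) :=
      dist_stationaryConvolutionBCF_le hω hS hScont _ _
    _ ≤ ω⁻¹ * (K * dist r₁ r₂) := by
      gcongr
      exact (lipschitz_comp hG).dist_le_mul r₁ r₂

lemma isFixedPt_mildSolutionMap_iff (hω : 0 < ω)
    (hS : ∀ t, 0 ≤ t → ‖S t‖ ≤ Real.exp (-ω * t))
    (hScont : ∀ x, ContinuousOn (fun t => S t x) (Ici 0)) {G : H → H} {K : NNReal}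
    (hG : LipschitzWith K G) (φ r : ℝ →ᵇ H) :
    Function.IsFixedPt (mildSolutionMap hω hS hScont hG φ) r ↔
      ∀ t, r t = stationaryConvolution S (G ∘ r) t + φ t := by
  rw [Function.IsFixedPt, eq_comm, BoundedContinuousFunction.ext_iff]
  rfl

end StationaryConvolution

theorem stationary_mild_solution_exists_unique
    {H : Type*} [NormedAddCommGroup H] [NormedSpace ℝ H] [CompleteSpace H]
    (ω η : ℝ) (hη : 0 ≤ η) (hωη : η < ω)
    (S : ℝ → H →L[ℝ] H)
    (hS : ∀ t : ℝ, 0 ≤ t → ‖S t‖ ≤ Real.exp (-ω * t))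
    (hScont : ∀ x : H, ContinuousOn (fun t : ℝ => S t x) (Set.Ici (0 : ℝ)))
    (G : H → H) (hG : LipschitzWith (Real.toNNReal η) G)
    (φ : ℝ → H) (hφc : Continuous φ) (hφb : ∃ M : ℝ, ∀ t : ℝ, ‖φ t‖ ≤ M) :
    ∃! r : ℝ → H,
      Continuous r ∧ (∃ M : ℝ, ∀ t : ℝ, ‖r t‖ ≤ M) ∧
      ∀ t : ℝ,
        IntegrableOn (fun s : ℝ => S (t - s) (G (r s))) (Set.Iic t) ∧
        r t = (∫ s in Set.Iic t, S (t - s) (G (r s))) + φ t := by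
  have hω : 0 < ω := hη.trans_lt hωη
  obtain ⟨M, hM⟩ := hφb
  set T := mildSolutionMap hω hS hScont hG (ofNormedAddCommGroup φ hφc M hM)
  have hT : ContractingWith _ T :=
    contractingWith_mildSolutionMap hω hS hScont hG (by rwa [Real.coe_toNNReal _ hη]) _
  have hsol : ∀ r : ℝ →ᵇ H, (∀ t, IntegrableOn (fun s => S (t - s) (G (r s))) (Iic t) ∧
      r t = (∫ s in Iic t, S (t - s) (G (r s))) + φ t) ↔ Function.IsFixedPt T r := fun r => by
    rw [isFixedPt_mildSolutionMap_iff]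
    exact forall_congr' fun t =>
      and_iff_right (integrableOn_Iic_apply_sub hω hS hScont (r.comp G hG) t)
  set r₀ := ContractingWith.fixedPoint T hT
  refine ⟨r₀, ⟨r₀.continuous, ⟨‖r₀‖, r₀.norm_coe_le_norm⟩, (hsol r₀).2 hT.fixedPoint_isFixedPt⟩, ?_⟩
  rintro r ⟨hrc, ⟨B, hB⟩, hr⟩
  exact congrArg (⇑) (hT.fixedPoint_unique ((hsol (ofNormedAddCommGroup r hrc B hB)).1 hr))
end
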